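/- Let (X,τ) be a Hausdorff locally solid vector lattice and (e_n) a positive increasing sequence in X. The following are equivalent: (i) the τ-closure of the ideal generated by {e_n : n ∈ ℕ} is all of X; (ii) for every sequence (x_k) in X_+, if x_k ∧ e_n → 0 in τ as k → ∞ for every n, then x_k → 0 in uτ. -/

import Mathlib

/-!
(i) ⇒ (ii). Given `a ≥ 0` and a solid neighbourhood `W`, density of the ideal gives `y` with
`|y| ≤ m • e n` and `|a - y| ∈ W`; then `x ⊓ a ≤ m • (x ⊓ e n) + |a - y|` for every `x ≥ 0`,
so `x k ⊓ a` is eventually in `W + W`.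

(ii) ⇒ (i). For `u ≥ 0` put `x k = (u - k • e k)⁺`. Since `k • ((u - k • b)⁺ ⊓ b) ≤ u` in any
lattice-ordered group, `x k ⊓ e n ≤ k⁻¹ • u` for `k ≥ n`, so (ii) applies and
`x k = |x k| ⊓ u → 0`. Hence `u ⊓ k • e k = u - x k`, which lies in the ideal, tends to `u`.
Positive vectors being in the closure of the ideal, so is every `u = u⁺ - u⁻`.
-/

open Filter Set Topology

variable {X : Type*} [Lattice X] [AddCommGroup X] [Module ℝ X]
  [CovariantClass X X (· + ·) (· ≤ ·)] [PosSMulMono ℝ X]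

/-- The Archimedean property for a lattice-ordered group. -/
def VLArchimedean (X : Type*) [Lattice X] [AddCommGroup X] : Prop :=
  ∀ x y : X, 0 ≤ x → (∀ n : ℕ, n • x ≤ y) → x = 0

/-- A set is solid if `x ∈ S` and `|y| ≤ |x|` imply `y ∈ S`. -/
def IsSolid (S : Set X) : Prop := ∀ ⦃x y : X⦄, x ∈ S → |y| ≤ |x| → y ∈ S

/-- A locally solid (linear) topology on a vector lattice. -/
def IsLocallySolidTop (τ : TopologicalSpace X) : Prop :=
  @IsTopologicalAddGroup X τ _ ∧ @ContinuousSMul ℝ X _ _ τ ∧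
    ∀ U ∈ @nhds X τ 0, ∃ V ∈ @nhds X τ 0, IsSolid V ∧ V ⊆ U

/-- An order ideal: a solid linear subspace. -/
def IsOrderIdeal (A : Set X) : Prop :=
  0 ∈ A ∧ (∀ x ∈ A, ∀ y ∈ A, x + y ∈ A) ∧ (∀ (c : ℝ), ∀ x ∈ A, c • x ∈ A) ∧ IsSolid A

/-- The order ideal generated by a set. -/
def idealGenerated (A : Set X) : Set X := ⋂₀ {I | IsOrderIdeal I ∧ A ⊆ I}

/-- A band: an order ideal closed under existing suprema. -/
def IsBand (B : Set X) : Prop :=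
  IsOrderIdeal B ∧ ∀ D ⊆ B, ∀ x : X, IsLUB D x → x ∈ B

/-- The band generated by a set. -/
def bandGenerated (A : Set X) : Set X := ⋂₀ {B | IsBand B ∧ A ⊆ B}

/-- `A` is a countable order basis: `A` is at most countable and generates `X` as a band. -/
def CountableOrderBasis (A : Set X) : Prop := A.Countable ∧ bandGenerated A = Set.univ

/-- The neighbourhood filter of zero of the unbounded topology `u_A τ`:
generated by the sets `{x : |x| ⊓ a ∈ U}` for `U` a `τ`-neighbourhood of zero, `a ∈ A₊`. -/
def unbNhdsZero (τ : TopologicalSpace X) (A : Set X) : Filter X :=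
  ⨅ a ∈ {a ∈ A | 0 ≤ a}, Filter.comap (fun x => |x| ⊓ a) (@nhds X τ 0)

/-- The unbounded topology `u_A τ` induced by the ideal `A`; `u τ = unbTopology τ Set.univ`. -/
def unbTopology (τ : TopologicalSpace X) (A : Set X) : TopologicalSpace X :=
  TopologicalSpace.mkOfNhds fun x => Filter.map (x + ·) (unbNhdsZero τ A)

/-- A sublattice/ideal is order dense if every nonzero positive vector dominates a
nonzero positive vector of it. -/
def OrderDense (A : Set X) : Prop := ∀ x : X, 0 < x → ∃ y ∈ A, 0 < y ∧ y ≤ x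

/-- A minimal topology: a Hausdorff locally solid topology with no strictly coarser
Hausdorff locally solid topology. (In Mathlib's order on `TopologicalSpace`,
`τ ≤ σ` means `τ` is finer than `σ`.) -/
def IsMinimalTop (τ : TopologicalSpace X) : Prop :=
  IsLocallySolidTop τ ∧ @T2Space X τ ∧
    ∀ σ : TopologicalSpace X, IsLocallySolidTop σ → @T2Space X σ → τ ≤ σ → σ = τ

/-- The countable sup property. -/
def CountableSupProperty (Y : Type*) [Lattice Y] : Prop :=
  ∀ S : Set Y, ∀ x : Y, S.Nonempty → IsLUB S x → ∃ C ⊆ S, C.Countable ∧ IsLUB C x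

/-- Order convergence to zero of a net: there is a downward directed set `D` with
infimum `0`, each member of which eventually dominates `|x α|`. -/
def OrderNull {ι : Type*} [Preorder ι] (x : ι → X) : Prop :=
  ∃ D : Set X, D.Nonempty ∧ (∀ a ∈ D, ∀ b ∈ D, ∃ c ∈ D, c ≤ a ∧ c ≤ b) ∧
    IsGLB D 0 ∧ ∀ d ∈ D, ∃ α₀ : ι, ∀ α, α₀ ≤ α → |x α| ≤ d

/-- Unbounded order (uo-) convergence to zero of a net. -/
def UoNull {ι : Type*} [Preorder ι] (x : ι → X) : Prop :=
  ∀ u : X, 0 ≤ u → OrderNull (fun α => |x α| ⊓ u)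

/-- A set is topologically bounded if it is absorbed by every neighbourhood of zero. -/
def TopBounded (τ : TopologicalSpace X) (S : Set X) : Prop :=
  ∀ U ∈ @nhds X τ 0, ∃ l : ℝ, 0 < l ∧ ∀ x ∈ S, l • x ∈ U

/-- A locally bounded topology: it has a topologically bounded neighbourhood of zero. -/
def LocallyBoundedTop (τ : TopologicalSpace X) : Prop :=
  ∃ V ∈ @nhds X τ 0, TopBounded τ V

/-- A submetrizable topology: finer than some metrizable linear topology.
(In Mathlib's order on `TopologicalSpace`, `τ ≤ σ` means `τ` is finer than `σ`.) -/
def Submetrizable (τ : TopologicalSpace X) : Prop :=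
  ∃ σ : TopologicalSpace X, @IsTopologicalAddGroup X σ _ ∧ @ContinuousSMul ℝ X _ _ σ ∧
    @TopologicalSpace.MetrizableSpace X σ ∧ τ ≤ σ

/-- A Riesz submetrizable topology: finer than some metrizable locally solid topology. -/
def RieszSubmetrizable (τ : TopologicalSpace X) : Prop :=
  ∃ σ : TopologicalSpace X, IsLocallySolidTop σ ∧ @TopologicalSpace.MetrizableSpace X σ ∧ τ ≤ σ

/-- Dedekind (order) completeness. -/
def DedekindComplete (Y : Type*) [Lattice Y] : Prop :=
  ∀ S : Set Y, S.Nonempty → BddAbove S → ∃ x, IsLUB S x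

/-- Lateral completeness: every nonempty set of pairwise disjoint positive vectors
has a supremum. -/
def LaterallyComplete (Y : Type*) [Lattice Y] [AddCommGroup Y] : Prop :=
  ∀ S : Set Y, S.Nonempty → (∀ x ∈ S, 0 ≤ x) → (S.Pairwise fun a b => a ⊓ b = 0) →
    ∃ x, IsLUB S x

section LatticeOrderedGroup

variable {G : Type*} [Lattice G] [AddCommGroup G] [AddLeftMono G]

lemma inf_add_le_inf_add_inf {a b c : G} (ha : 0 ≤ a) (hb : 0 ≤ b) (hc : 0 ≤ c) :
    a ⊓ (b + c) ≤ a ⊓ b + a ⊓ c := by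
  rw [← sub_le_iff_le_add', sub_inf]
  refine sup_le ((sub_nonpos.2 inf_le_left).trans (le_inf ha hc)) (le_inf ?_ ?_)
  · rw [sub_le_iff_le_add]
    exact inf_le_left.trans (le_add_of_nonneg_right hb)
  · rw [sub_le_iff_le_add, add_comm]
    exact inf_le_right

lemma inf_nsmul_le_nsmul_inf {a b : G} (ha : 0 ≤ a) (hb : 0 ≤ b) (m : ℕ) :
    a ⊓ m • b ≤ m • (a ⊓ b) := by
  induction m with
  | zero => simp [inf_eq_right.2 ha]
  | succ m ih =>
    rw [succ_nsmul, succ_nsmul]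
    exact (inf_add_le_inf_add_inf ha (nsmul_nonneg hb m) hb).trans (add_le_add ih le_rfl)

lemma eq_zero_of_le_nsmul_of_inf_eq_zero {w s : G} {k : ℕ} (hw : 0 ≤ w) (hs : 0 ≤ s)
    (hle : w ≤ k • s) (hws : w ⊓ s = 0) : w = 0 := by
  refine le_antisymm ?_ hw
  calc w = w ⊓ k • s := (inf_eq_left.2 hle).symm
    _ ≤ k • (w ⊓ s) := inf_nsmul_le_nsmul_inf hw hs k
    _ = 0 := by rw [hws, nsmul_zero]

/-- The lattice-group form of `(u - k b)⁺ ⊓ b ≤ u / k`. -/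
lemma nsmul_inf_posPart_sub_nsmul_le {u b : G} (hu : 0 ≤ u) (hb : 0 ≤ b) (k : ℕ) :
    k • ((u - k • b)⁺ ⊓ b) ≤ u := by
  set s := (u - k • b)⁺ ⊓ b
  have hs : 0 ≤ s := le_inf (posPart_nonneg _) hb
  have hs_le : s ≤ (u - k • s)⁺ :=
    inf_le_left.trans (posPart_mono (sub_le_sub_left (nsmul_le_nsmul_right inf_le_right k) u))
  -- `s` is dominated by the positive part of `u - k • s`, hence disjoint from its negative part
  have hdisj : (k • s - u)⁺ ⊓ s = 0 := by
    refine le_antisymm ?_ (le_inf (posPart_nonneg _) hs)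
    calc (k • s - u)⁺ ⊓ s ≤ (u - k • s)⁻ ⊓ (u - k • s)⁺ := by
          rw [← posPart_neg, neg_sub]; exact inf_le_inf_left _ hs_le
      _ = 0 := by rw [inf_comm, posPart_inf_negPart_eq_zero]
  have hzero : (k • s - u)⁺ = 0 :=
    eq_zero_of_le_nsmul_of_inf_eq_zero (posPart_nonneg _) hs
      (sup_le (sub_le_self _ hu) (nsmul_nonneg hs k)) hdisj
  exact sub_nonpos.1 (posPart_eq_zero.1 hzero)

lemma abs_add_inf_le {a : G} (ha : 0 ≤ a) (x y : G) : |x + y| ⊓ a ≤ |x| ⊓ a + |y| ⊓ a := by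
  simp only [inf_comm _ a]
  exact (inf_le_inf_left a (abs_add_le x y)).trans
    (inf_add_le_inf_add_inf ha (abs_nonneg x) (abs_nonneg y))

lemma inf_le_nsmul_inf_add_abs_sub {x a b y : G} {m : ℕ} (hx : 0 ≤ x) (hb : 0 ≤ b)
    (hy : |y| ≤ m • b) : x ⊓ a ≤ m • (x ⊓ b) + |a - y| := by
  have ha : a ≤ |y| + |a - y| :=
    calc a = y + (a - y) := (add_sub_cancel y a).symm
      _ ≤ |y| + |a - y| := add_le_add (le_abs_self y) (le_abs_self _)
  calc x ⊓ a ≤ x ⊓ |y| + x ⊓ |a - y| :=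
        (inf_le_inf_left x ha).trans (inf_add_le_inf_add_inf hx (abs_nonneg _) (abs_nonneg _))
    _ ≤ m • (x ⊓ b) + |a - y| :=
        add_le_add ((inf_le_inf_left x hy).trans (inf_nsmul_le_nsmul_inf hx hb m)) inf_le_right

lemma AddSubgroup.topologicalClosure_eq_top_of_nonneg [TopologicalSpace G]
    [IsTopologicalAddGroup G] (S : AddSubgroup G)
    (h : ∀ u, 0 ≤ u → u ∈ S.topologicalClosure) : S.topologicalClosure = ⊤ :=
  eq_top_iff.2 fun u _ => posPart_sub_negPart u ▸
    sub_mem (h _ (posPart_nonneg u)) (h _ (negPart_nonneg u))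

lemma IsSolid.mem_of_nonneg_of_le {S : Set G} (hS : IsSolid S) {x y : G} (hx : x ∈ S)
    (hy : 0 ≤ y) (hyx : y ≤ x) : y ∈ S :=
  hS hx (by rwa [abs_of_nonneg hy, abs_of_nonneg (hy.trans hyx)])

end LatticeOrderedGroup

section VectorLattice

variable {E : Type*} [Lattice E] [AddCommGroup E] [Module ℝ E]

lemma abs_smul_le [PosSMulMono ℝ E] (c : ℝ) (y : E) : |c • y| ≤ |c| • |y| := by
  have hle : ∀ c : ℝ, c • y ≤ |c| • |y| := fun c => by
    rcases le_or_gt 0 c with hc | hc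
    · rw [abs_of_nonneg hc]
      exact smul_le_smul_of_nonneg_left (le_abs_self y) hc
    · rw [abs_of_neg hc, ← neg_smul_neg]
      exact smul_le_smul_of_nonneg_left (neg_le_abs y) (neg_nonneg.2 hc.le)
  refine sup_le (hle c) ?_
  rw [← neg_smul, ← abs_neg c]
  exact hle (-c)

lemma isOrderIdeal_idealGenerated (A : Set E) : IsOrderIdeal (idealGenerated A) :=
  ⟨fun _ hI => hI.1.1,
    fun _ hx _ hy I hI => hI.1.2.1 _ (hx I hI) _ (hy I hI),
    fun c _ hx I hI => hI.1.2.2.1 c _ (hx I hI),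
    fun _ _ hx hyx I hI => hI.1.2.2.2 (hx I hI) hyx⟩

def IsOrderIdeal.toAddSubgroup {I : Set E} (hI : IsOrderIdeal I) : AddSubgroup E where
  carrier := I
  zero_mem' := hI.1
  add_mem' {x y} hx hy := hI.2.1 x hx y hy
  neg_mem' {x} hx := by simpa using hI.2.2.1 (-1) x hx

lemma nsmul_mem_of_isOrderIdeal {I : Set E} (hI : IsOrderIdeal I) {x : E} (hx : x ∈ I)
    (m : ℕ) : m • x ∈ I := by
  simpa only [Nat.cast_smul_eq_nsmul] using hI.2.2.1 (m : ℝ) x hx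

variable {τ : TopologicalSpace E}

lemma IsLocallySolidTop.exists_solid_add_subset (hτ : IsLocallySolidTop τ) {U : Set E}
    (hU : U ∈ @nhds E τ 0) :
    ∃ W ∈ @nhds E τ 0, IsSolid W ∧ ∀ v ∈ W, ∀ w ∈ W, v + w ∈ U := by
  let _ := τ
  have := hτ.1
  obtain ⟨V, hV, hVU⟩ := exists_nhds_zero_half hU
  obtain ⟨W, hW, hWs, hWV⟩ := hτ.2.2 V hV
  exact ⟨W, hW, hWs, fun v hv w hw => hVU _ (hWV hv) _ (hWV hw)⟩

variable [AddLeftMono E]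

lemma IsLocallySolidTop.tendsto_nhds_zero_of_le (hτ : IsLocallySolidTop τ) {ι : Type*}
    {l : Filter ι} {f g : ι → E} (hf : ∀ᶠ k in l, 0 ≤ f k) (hfg : ∀ᶠ k in l, f k ≤ g k)
    (hg : Tendsto g l (@nhds E τ 0)) : Tendsto f l (@nhds E τ 0) := fun U hU => by
  obtain ⟨V, hV, hVs, hVU⟩ := hτ.2.2 U hU
  refine mem_map.2 ?_
  filter_upwards [hf, hfg, hg.eventually_mem hV] with k hk0 hkg hgV
  exact hVU (hVs.mem_of_nonneg_of_le hgV hk0 hkg)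

lemma hasBasis_unbNhdsZero (hτ : IsLocallySolidTop τ) :
    (unbNhdsZero τ univ).HasBasis (fun p : E × Set E => 0 ≤ p.1 ∧ p.2 ∈ @nhds E τ 0)
      fun p => {x | |x| ⊓ p.1 ∈ p.2} := by
  have hdom : {a ∈ (univ : Set E) | 0 ≤ a}.Nonempty := ⟨0, trivial, le_rfl⟩
  refine (hasBasis_biInf_of_directed hdom _ _
    (fun a _ => (@nhds E τ 0).basis_sets.comap _) ?_).congr (by simp) fun _ _ => rfl
  have hmono : ∀ a b : E, 0 ≤ a → a ≤ b → comap (fun x => |x| ⊓ b) (@nhds E τ 0) ≤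
      comap (fun x => |x| ⊓ a) (@nhds E τ 0) := fun a b ha hab =>
    tendsto_iff_comap.1 <| hτ.tendsto_nhds_zero_of_le
      (Eventually.of_forall fun x => le_inf (abs_nonneg x) ha)
      (Eventually.of_forall fun x => inf_le_inf_left _ hab) tendsto_comap
  rintro a ⟨-, ha⟩ b ⟨-, hb⟩
  exact ⟨a ⊔ b, ⟨trivial, ha.trans le_sup_left⟩, hmono a _ ha le_sup_left,
    hmono b _ hb le_sup_right⟩

lemma IsLocallySolidTop.exists_add_subset_of_mem_unbNhdsZero (hτ : IsLocallySolidTop τ)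
    {s : Set E} (hs : s ∈ unbNhdsZero τ univ) :
    ∃ t ∈ unbNhdsZero τ univ, ∀ v ∈ t, ∀ w ∈ t, v + w ∈ s := by
  obtain ⟨⟨a, U⟩, ⟨ha, hU⟩, hUs⟩ := (hasBasis_unbNhdsZero hτ).mem_iff.1 hs
  obtain ⟨U', hU', hU's, hU'U⟩ := hτ.2.2 U hU
  obtain ⟨W, hW, -, hWU'⟩ := hτ.exists_solid_add_subset hU'
  refine ⟨{x | |x| ⊓ a ∈ W}, (hasBasis_unbNhdsZero hτ).mem_of_mem (i := (a, W)) ⟨ha, hW⟩,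
    fun v hv w hw => hUs (hU'U ?_)⟩
  exact hU's.mem_of_nonneg_of_le (hWU' _ hv _ hw) (le_inf (abs_nonneg _) ha)
    (abs_add_inf_le ha v w)

lemma nhds_unbTopology (hτ : IsLocallySolidTop τ) (x : E) :
    @nhds E (unbTopology τ univ) x = map (x + ·) (unbNhdsZero τ univ) := by
  have hpure : pure 0 ≤ unbNhdsZero τ univ :=
    (hasBasis_unbNhdsZero hτ).ge_iff.2 fun ⟨a, U⟩ ⟨ha, hU⟩ => by
      simpa [inf_eq_left.2 ha] using mem_of_mem_nhds hU
  refine TopologicalSpace.nhds_mkOfNhds _ _ (fun z => ?_) (fun z s hs => ?_)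
  · simpa using (map_mono hpure : map (z + ·) (pure 0) ≤ _)
  · obtain ⟨t, ht, hts⟩ := hτ.exists_add_subset_of_mem_unbNhdsZero (mem_map.1 hs)
    filter_upwards [image_mem_map ht]
    rintro _ ⟨v, hv, rfl⟩
    exact mem_map.2 <| mem_of_superset ht fun w hw => by simpa [add_assoc] using hts v hv w hw

lemma tendsto_unbTopology_nhds_zero_iff (hτ : IsLocallySolidTop τ) {ι : Type*}
    {l : Filter ι} {f : ι → E} :
    Tendsto f l (@nhds E (unbTopology τ univ) 0) ↔
      ∀ a : E, 0 ≤ a → Tendsto (fun k => |f k| ⊓ a) l (@nhds E τ 0) := by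
  simp only [nhds_unbTopology hτ, zero_add, map_id', unbNhdsZero, tendsto_iInf,
    tendsto_comap_iff, mem_ofPred_eq, mem_univ, true_and]
  rfl

variable [PosSMulMono ℝ E] {e : ℕ → E}

lemma mem_idealGenerated_range_iff (he : ∀ n, 0 ≤ e n) (hmono : Monotone e) {y : E} :
    y ∈ idealGenerated (range e) ↔ ∃ n m : ℕ, |y| ≤ m • e n := by
  constructor
  · intro hy
    refine hy {y | ∃ n m : ℕ, |y| ≤ m • e n} ⟨⟨⟨0, 0, by simp⟩, ?_, ?_, ?_⟩, ?_⟩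
    · rintro x ⟨n₁, m₁, h₁⟩ z ⟨n₂, m₂, h₂⟩
      refine ⟨max n₁ n₂, m₁ + m₂, (abs_add_le x z).trans ?_⟩
      rw [add_nsmul]
      exact add_le_add (h₁.trans (nsmul_le_nsmul_right (hmono (le_max_left _ _)) m₁))
        (h₂.trans (nsmul_le_nsmul_right (hmono (le_max_right _ _)) m₂))
    · rintro c x ⟨n, m, h⟩
      refine ⟨n, ⌈|c| * m⌉₊, ?_⟩
      have hceil : 0 ≤ ((⌈|c| * m⌉₊ : ℝ) - |c| * m) • e n :=
        smul_nonneg (sub_nonneg.2 (Nat.le_ceil _)) (he n)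
      rw [sub_smul, sub_nonneg, Nat.cast_smul_eq_nsmul, mul_smul,
        Nat.cast_smul_eq_nsmul] at hceil
      exact (abs_smul_le c x).trans
        ((smul_le_smul_of_nonneg_left h (abs_nonneg c)).trans hceil)
    · rintro x z ⟨n, m, h⟩ hzx
      exact ⟨n, m, hzx.trans h⟩
    · rintro _ ⟨n, rfl⟩
      exact ⟨n, 1, by rw [abs_of_nonneg (he n), one_nsmul]⟩
  · rintro ⟨n, m, h⟩ I ⟨hI, hrange⟩
    refine hI.2.2.2 (nsmul_mem_of_isOrderIdeal hI (hrange ⟨n, rfl⟩) m) ?_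
    rwa [abs_of_nonneg (nsmul_nonneg (he n) m)]

lemma tendsto_unbTopology_of_closure_idealGenerated_eq_univ (hτ : IsLocallySolidTop τ)
    (he : ∀ n, 0 ≤ e n) (hmono : Monotone e)
    (hdense : @closure E τ (idealGenerated (range e)) = univ) {ι : Type*} {l : Filter ι}
    {x : ι → E} (hx : ∀ k, 0 ≤ x k) (hxe : ∀ n, Tendsto (fun k => x k ⊓ e n) l (@nhds E τ 0)) :
    Tendsto x l (@nhds E (unbTopology τ univ) 0) := by
  let _ := τ
  have := hτ.1
  have := hτ.2.1
  refine (tendsto_unbTopology_nhds_zero_iff hτ).2 fun a ha U hU => ?_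
  obtain ⟨U', hU', hU's, hU'U⟩ := hτ.2.2 U hU
  obtain ⟨W, hW, hWs, hWU'⟩ := hτ.exists_solid_add_subset hU'
  obtain ⟨y, hyI, hyW⟩ := mem_closure_iff_nhds_zero.1 (hdense ▸ mem_univ a) W hW
  obtain ⟨n, m, hym⟩ := (mem_idealGenerated_range_iff he hmono).1 hyI
  have hm : Tendsto (fun k => m • (x k ⊓ e n)) l (𝓝 0) := by
    simpa only [Nat.cast_smul_eq_nsmul, smul_zero] using (hxe n).const_smul (m : ℝ)
  refine mem_map.2 ?_
  filter_upwards [hm.eventually_mem hW] with k hk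
  have hay : |a - y| ∈ W := hWs hyW (by rw [abs_abs, abs_sub_comm])
  refine hU'U (hU's.mem_of_nonneg_of_le (hWU' _ hk _ hay) (le_inf (abs_nonneg _) ha) ?_)
  show |x k| ⊓ a ≤ _
  rw [abs_of_nonneg (hx k)]
  exact inf_le_nsmul_inf_add_abs_sub (hx k) (he n) hym

lemma tendsto_posPart_sub_nsmul_inf (hτ : IsLocallySolidTop τ) (he : ∀ n, 0 ≤ e n)
    (hmono : Monotone e) {u : E} (hu : 0 ≤ u) (n : ℕ) :
    Tendsto (fun k : ℕ => (u - k • e k)⁺ ⊓ e n) atTop (@nhds E τ 0) := by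
  let _ := τ
  have := hτ.2.1
  have hinv : Tendsto (fun k : ℕ => (k : ℝ)⁻¹ • u) atTop (𝓝 0) := by
    simpa using
      (tendsto_inv_atTop_zero.comp (tendsto_natCast_atTop_atTop (R := ℝ))).smul_const u
  refine hτ.tendsto_nhds_zero_of_le
    (Eventually.of_forall fun k => le_inf (posPart_nonneg _) (he n)) ?_ hinv
  filter_upwards [eventually_ge_atTop (max n 1)] with k hk
  have hk0 : (0 : ℝ) < k := by exact_mod_cast (le_max_right n 1).trans hk
  rw [← inv_smul_smul₀ hk0.ne' ((u - k • e k)⁺ ⊓ e n), Nat.cast_smul_eq_nsmul]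
  refine smul_le_smul_of_nonneg_left ((nsmul_le_nsmul_right ?_ k).trans
    (nsmul_inf_posPart_sub_nsmul_le hu (he n) k)) (inv_nonneg.2 hk0.le)
  exact inf_le_inf_right _ (posPart_mono (sub_le_sub_left
    (nsmul_le_nsmul_right (hmono ((le_max_left n 1).trans hk)) k) u))

lemma closure_idealGenerated_eq_univ_of_forall_tendsto (hτ : IsLocallySolidTop τ)
    (he : ∀ n, 0 ≤ e n) (hmono : Monotone e)
    (h : ∀ x : ℕ → E, (∀ k, 0 ≤ x k) →
      (∀ n, Tendsto (fun k => x k ⊓ e n) atTop (@nhds E τ 0)) →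
      Tendsto x atTop (@nhds E (unbTopology τ univ) 0)) :
    @closure E τ (idealGenerated (range e)) = univ := by
  let _ := τ
  have := hτ.1
  let I := (isOrderIdeal_idealGenerated (range e)).toAddSubgroup
  suffices I.topologicalClosure = ⊤ by
    rw [← SetLike.coe_set_eq, AddSubgroup.topologicalClosure_coe] at this
    exact this
  refine I.topologicalClosure_eq_top_of_nonneg fun u hu => ?_
  set x : ℕ → E := fun k => (u - k • e k)⁺
  have hxu : ∀ k, x k ≤ u := fun k =>
    (posPart_mono (sub_le_self u (nsmul_nonneg (he k) k))).trans (posPart_eq_self.2 hu).le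
  have hx : Tendsto x atTop (𝓝 0) := by
    have := (tendsto_unbTopology_nhds_zero_iff hτ).1
      (h x (fun k => posPart_nonneg _) (tendsto_posPart_sub_nsmul_inf hτ he hmono hu)) u hu
    have hxk : ∀ k, |x k| ⊓ u = x k := fun k =>
      by rw [abs_of_nonneg (posPart_nonneg _), inf_eq_left.2 (hxu k)]
    simpa only [hxk] using this
  refine mem_closure_of_tendsto (by simpa using tendsto_const_nhds.sub hx)
    (Eventually.of_forall fun k => ?_)
  rw [← inf_eq_sub_posPart_sub]
  refine (mem_idealGenerated_range_iff he hmono).2 ⟨k, k, ?_⟩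
  rw [abs_of_nonneg (le_inf hu (nsmul_nonneg (he k) k))]
  exact inf_le_right

end VectorLattice

theorem stmt7_general (τ : TopologicalSpace X)
    (hτ : IsLocallySolidTop τ)
    (e : ℕ → X) (he : ∀ n, 0 ≤ e n) (hmono : Monotone e) :
    @closure X τ (idealGenerated (Set.range e)) = Set.univ ↔
      ∀ x : ℕ → X, (∀ k, 0 ≤ x k) →
        (∀ n, Filter.Tendsto (fun k => x k ⊓ e n) Filter.atTop (@nhds X τ 0)) →
        Filter.Tendsto x Filter.atTop (@nhds X (unbTopology τ Set.univ) 0) :=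
  ⟨fun hdense _ hx hxe =>
    tendsto_unbTopology_of_closure_idealGenerated_eq_univ hτ he hmono hdense hx hxe,
    closure_idealGenerated_eq_univ_of_forall_tendsto hτ he hmono⟩

/-- for a positive increasing sequence `(e n)`, the ideal generated by the
`e n` is `τ`-dense iff every positive sequence `x` with `x k ⊓ e n → 0` in `τ` for all
`n` is `u τ`-null. -/
theorem stmt7 (hArch : VLArchimedean X) (τ : TopologicalSpace X)
    (hτ : IsLocallySolidTop τ) (hT2 : @T2Space X τ)
    (e : ℕ → X) (he : ∀ n, 0 ≤ e n) (hmono : Monotone e) :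
    @closure X τ (idealGenerated (Set.range e)) = Set.univ ↔
      ∀ x : ℕ → X, (∀ k, 0 ≤ x k) →
        (∀ n, Filter.Tendsto (fun k => x k ⊓ e n) Filter.atTop (@nhds X τ 0)) →
        Filter.Tendsto x Filter.atTop (@nhds X (unbTopology τ Set.univ) 0) :=
  stmt7_general τ hτ e he hmono
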